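/- arXiv:0708.2152 — 2 statements merged into one kernel-verified Lean document; each statement's English description precedes it below -/
import Mathlib

section
/- Let d ≥ 1 and let μ be a probability measure on Ω satisfying GEMB(c) for some c > 0. Let f, g : Ω → ℝ be bounded measurable, let ψ : ℤ^d → [0,∞), let u, v ≥ 1 be real numbers with 1/u + 1/v = 3/2, and suppose that δ_i g ≤ (ψ * δf)(i) for every i ∈ ℤ^d, that 0 < ‖ψ‖_u < ∞ and 0 < ‖δf‖_v < ∞. Then for every real p ≥ 1, (∫ |g − ∫ g dμ|^p dμ)^{1/p} ≤ 2√c · (p Γ(p/2))^{1/p} · ‖ψ‖_u · ‖δf‖_v. -/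
/-!
Write `B = ‖ψ‖_u ‖δf‖_v`. Young's convolution inequality `‖ψ * a‖₂ ≤ ‖ψ‖_u ‖a‖_v` for
`1/u + 1/v = 1 + 1/2` gives `‖δg‖₂ ≤ B`. Applying GEMB(c) to `t • g` for every real `t` shows that
`g - ∫ g dμ` is sub-Gaussian with variance proxy `2cB²`, hence
`μ(|g - ∫ g dμ| > t) ≤ 2 exp(-t²/(4cB²))`. Integrating this tail against `p t^(p-1) dt` yields
`∫ |g - ∫ g dμ|^p dμ ≤ p Γ(p/2) (4cB²)^(p/2)`, which is the claim after taking `p`-th roots.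
-/

open MeasureTheory Real

noncomputable section

/-- The configuration space `Ω = {0,1}^{ℤ^d}`, encoded as functions `ℤ^d → Bool`,
with the product σ-algebra (the Borel σ-algebra of the product topology). -/
abbrev Config (d : ℕ) := (Fin d → ℤ) → Bool

/-- `flipAt i σ` is the configuration `σ^i` obtained from `σ` by flipping the spin at site `i`. -/
def flipAt {d : ℕ} (i : Fin d → ℤ) (σ : Config d) : Config d :=
  Function.update σ i (!σ i)

/-- The variation of `f` at site `i`: `δ_i f = sup_η (f(η^i) - f(η))`. -/
noncomputable def varAt {d : ℕ} (i : Fin d → ℤ) (f : Config d → ℝ) : ℝ :=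
  ⨆ η : Config d, (f (flipAt i η) - f η)

/-- `μ` satisfies the Gaussian exponential-moment bound GEMB(c). -/
def GEMB {d : ℕ} (μ : Measure (Config d)) (c : ℝ) : Prop :=
  ∀ h : Config d → ℝ, Measurable h → (∃ M, ∀ σ, |h σ| ≤ M) →
    Summable (fun i : Fin d → ℤ => varAt i h ^ 2) →
    ∫ σ, Real.exp (h σ - ∫ τ, h τ ∂μ) ∂μ ≤
      Real.exp (c * ∑' i : Fin d → ℤ, varAt i h ^ 2)

open ProbabilityTheory
open scoped ENNReal NNReal

section Variation

variable {d : ℕ}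

@[simp]
lemma flipAt_flipAt (i : Fin d → ℤ) (σ : Config d) : flipAt i (flipAt i σ) = σ := by
  funext j
  by_cases h : j = i
  · subst h; simp [flipAt]
  · simp [flipAt, Function.update_of_ne h]

lemma flipAt_involutive (i : Fin d → ℤ) : Function.Involutive (flipAt i) :=
  flipAt_flipAt i

lemma varAt_nonneg (i : Fin d → ℤ) (f : Config d → ℝ) : 0 ≤ varAt i f := by
  by_cases hb : BddAbove (Set.range fun η => f (flipAt i η) - f η)
  · let σ : Config d := fun _ => false
    have h₁ := le_ciSup hb σ
    have h₂ := le_ciSup hb (flipAt i σ)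
    simp only [flipAt_flipAt] at h₂
    unfold varAt
    linarith
  · exact (Real.iSup_of_not_bddAbove hb).ge

lemma varAt_neg (i : Fin d → ℤ) (f : Config d → ℝ) :
    varAt i (fun σ => -f σ) = varAt i f := by
  unfold varAt
  rw [← (flipAt_involutive i).toPerm.iSup_comp]
  simp [neg_add_eq_sub]

lemma varAt_const_mul (i : Fin d → ℤ) (t : ℝ) (f : Config d → ℝ) :
    varAt i (fun σ => t * f σ) = |t| * varAt i f := by
  have of_nonneg : ∀ {s : ℝ}, 0 ≤ s → ∀ F : Config d → ℝ,
      varAt i (fun σ => s * F σ) = s * varAt i F := fun hs F => by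
    simp only [varAt, Real.mul_iSup_of_nonneg hs, mul_sub]
  rcases le_or_gt 0 t with ht | ht
  · rw [abs_of_nonneg ht, of_nonneg ht]
  · rw [abs_of_neg ht, ← varAt_neg i f, ← of_nonneg (neg_nonneg.2 ht.le)]
    simp

end Variation

lemma le_two_of_one_div_add_one_div_eq {u v : ℝ} (hu : 1 ≤ u) (hv : 1 ≤ v)
    (huv : 1 / u + 1 / v = 3 / 2) : u ≤ 2 := by
  have hv' : 1 / v ≤ 1 := (div_le_one₀ (by linarith)).2 hv
  have hu' : 1 / 2 ≤ 1 / u := by linarith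
  rwa [one_div_le_one_div (by norm_num) (by linarith)] at hu'

namespace ENNReal

theorem tsum_rpow_mul_rpow_le {ι : Type*} [Countable ι] (f g : ι → ℝ≥0∞) {p q : ℝ}
    (hp : 0 ≤ p) (hq : 0 ≤ q) (hpq : p + q = 1) :
    ∑' i, f i ^ p * g i ^ q ≤ (∑' i, f i) ^ p * (∑' i, g i) ^ q := by
  let _ : MeasurableSpace ι := ⊤
  have _ : MeasurableSingletonClass ι := ⟨fun _ => MeasurableSpace.measurableSet_top⟩
  simpa [lintegral_count] using lintegral_mul_norm_pow_le (μ := (Measure.count : Measure ι))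
    measurable_from_top.aemeasurable measurable_from_top.aemeasurable hp hq hpq

theorem sq_tsum_mul_le {ι : Type*} [Countable ι] (F G : ι → ℝ≥0∞) {u v : ℝ}
    (hu₀ : 0 ≤ u) (hu₂ : u ≤ 2) (hv₀ : 0 ≤ v) (hv₂ : v ≤ 2) :
    (∑' k, F k * G k) ^ 2 ≤
      (∑' k, F k ^ u * G k ^ v) * ∑' k, F k ^ (2 - u) * G k ^ (2 - v) := by
  have half_mul_half : ∀ x y : ℝ≥0∞, (x ^ (1 / 2 : ℝ) * y ^ (1 / 2 : ℝ)) ^ 2 = x * y := by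
    intro x y
    rw [mul_pow, ← rpow_natCast, ← rpow_natCast, ← rpow_mul, ← rpow_mul]
    norm_num
  have split : ∀ (x : ℝ≥0∞) (s : ℝ), 0 ≤ s → s ≤ 2 →
      (x ^ s) ^ (1 / 2 : ℝ) * (x ^ (2 - s)) ^ (1 / 2 : ℝ) = x := by
    intro x s hs₀ hs₂
    rw [← rpow_mul, ← rpow_mul, ← rpow_add_of_nonneg _ _ (by linarith) (by linarith),
      show s * (1 / 2) + (2 - s) * (1 / 2) = 1 by ring, rpow_one]
  have factor : ∀ k, F k * G k = (F k ^ u * G k ^ v) ^ (1 / 2 : ℝ) *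
      (F k ^ (2 - u) * G k ^ (2 - v)) ^ (1 / 2 : ℝ) := fun k => by
    rw [mul_rpow_of_nonneg _ _ (by norm_num), mul_rpow_of_nonneg _ _ (by norm_num),
      mul_mul_mul_comm, split _ _ hu₀ hu₂, split _ _ hv₀ hv₂]
  rw [tsum_congr factor, ← half_mul_half]
  gcongr
  exact tsum_rpow_mul_rpow_le _ _ (by norm_num) (by norm_num) (by norm_num)

theorem tsum_tsum_sub_mul {ι : Type*} [AddCommGroup ι] (F G : ι → ℝ≥0∞) :
    ∑' i, ∑' k, F (i - k) * G k = (∑' i, F i) * ∑' k, G k := by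
  rw [ENNReal.tsum_comm, ← ENNReal.tsum_mul_left]
  refine tsum_congr fun k => ?_
  rw [ENNReal.tsum_mul_right]
  exact congrArg (· * G k) ((Equiv.subRight k).tsum_eq F)

theorem tsum_sq_conv_le {ι : Type*} [AddCommGroup ι] [Countable ι] (Ψ A : ι → ℝ≥0∞)
    {u v : ℝ} (hu : 1 ≤ u) (hv : 1 ≤ v) (huv : 1 / u + 1 / v = 3 / 2) :
    ∑' i, (∑' k, Ψ (i - k) * A k) ^ 2 ≤
      (∑' i, Ψ i ^ u) ^ (2 / u) * (∑' i, A i ^ v) ^ (2 / v) := by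
  have hu₂ := le_two_of_one_div_add_one_div_eq hu hv huv
  have hv₂ := le_two_of_one_div_add_one_div_eq hv hu (by rwa [add_comm])
  set P := ∑' i, Ψ i ^ u
  set Q := ∑' i, A i ^ v
  set α := (2 - u) / u
  set β := (2 - v) / v
  have hα : 0 ≤ α := div_nonneg (by linarith) (by linarith)
  have hβ : 0 ≤ β := div_nonneg (by linarith) (by linarith)
  have hαβ : α + β = 1 := by
    have : α + β = 2 * (1 / u + 1 / v) - 2 := by
      simp only [α, β]
      field_simp
      ring
    rw [this, huv]
    norm_num
  have remainder : ∀ i, ∑' k, Ψ (i - k) ^ (2 - u) * A k ^ (2 - v) ≤ P ^ α * Q ^ β := by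
    intro i
    calc ∑' k, Ψ (i - k) ^ (2 - u) * A k ^ (2 - v)
        = ∑' k, (Ψ (i - k) ^ u) ^ α * (A k ^ v) ^ β := by
          simp only [α, β, ← rpow_mul, mul_div_cancel₀ _ (by linarith : u ≠ 0),
            mul_div_cancel₀ _ (by linarith : v ≠ 0)]
      _ ≤ (∑' k, Ψ (i - k) ^ u) ^ α * Q ^ β := tsum_rpow_mul_rpow_le _ _ hα hβ hαβ
      _ = P ^ α * Q ^ β := congrArg (· ^ α * Q ^ β) ((Equiv.subLeft i).tsum_eq fun j => Ψ j ^ u)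
  calc ∑' i, (∑' k, Ψ (i - k) * A k) ^ 2
      ≤ ∑' i, (∑' k, Ψ (i - k) ^ u * A k ^ v) * (P ^ α * Q ^ β) := by
        gcongr with i
        grw [sq_tsum_mul_le _ _ (by linarith) hu₂ (by linarith) hv₂, remainder i]
    _ = P * Q * (P ^ α * Q ^ β) := by
        rw [ENNReal.tsum_mul_right, tsum_tsum_sub_mul (fun j => Ψ j ^ u) fun k => A k ^ v]
    _ = P ^ (2 / u) * Q ^ (2 / v) := by
        have hu' : 2 / u = 1 + α := by simp only [α]; field_simp; ring
        have hv' : 2 / v = 1 + β := by simp only [β]; field_simp; ring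
        rw [hu', hv', rpow_add_of_nonneg _ _ zero_le_one hα,
          rpow_add_of_nonneg _ _ zero_le_one hβ, rpow_one, rpow_one]
        ring

end ENNReal

lemma ENNReal.ofReal_tsum_le_tsum_ofReal {ι : Type*} {f : ι → ℝ} (hf : ∀ i, 0 ≤ f i) :
    ENNReal.ofReal (∑' i, f i) ≤ ∑' i, ENNReal.ofReal (f i) := by
  by_cases h : Summable f
  · rw [ENNReal.ofReal_tsum_of_nonneg hf h]
  · simp [tsum_eq_zero_of_not_summable h]

lemma summable_and_tsum_le_of_tsum_ofReal_le {ι : Type*} {f : ι → ℝ} (hf : ∀ i, 0 ≤ f i)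
    {R : ℝ} (hR₀ : 0 ≤ R) (hR : ∑' i, ENNReal.ofReal (f i) ≤ ENNReal.ofReal R) :
    Summable f ∧ ∑' i, f i ≤ R := by
  have hfin := ne_top_of_le_ne_top ENNReal.ofReal_ne_top hR
  have hsum : Summable f :=
    (ENNReal.summable_toReal hfin).congr fun i => ENNReal.toReal_ofReal (hf i)
  refine ⟨hsum, ?_⟩
  rw [← ENNReal.ofReal_tsum_of_nonneg hf hsum] at hR
  exact (ENNReal.ofReal_le_ofReal_iff hR₀).1 hR

theorem summable_sq_and_tsum_sq_le_of_le_conv {ι : Type*} [AddCommGroup ι] [Countable ι]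
    {ψ a b : ι → ℝ} (hψ₀ : ∀ i, 0 ≤ ψ i) (ha₀ : ∀ i, 0 ≤ a i) (hb₀ : ∀ i, 0 ≤ b i)
    (hb : ∀ i, b i ≤ ∑' k, ψ (i - k) * a k) {u v : ℝ} (hu : 1 ≤ u) (hv : 1 ≤ v)
    (huv : 1 / u + 1 / v = 3 / 2) (hψ : Summable fun i => ψ i ^ u)
    (ha : Summable fun i => a i ^ v) :
    Summable (fun i => b i ^ 2) ∧
      ∑' i, b i ^ 2 ≤ (∑' i, ψ i ^ u) ^ (2 / u) * (∑' i, a i ^ v) ^ (2 / v) := by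
  have ofReal_tsum_rpow : ∀ {w : ℝ} (f : ι → ℝ), 0 ≤ w → (∀ i, 0 ≤ f i) →
      Summable (fun i => f i ^ w) →
      ∑' i, ENNReal.ofReal (f i) ^ w = ENNReal.ofReal (∑' i, f i ^ w) := by
    intro w f hw hf hfw
    rw [ENNReal.ofReal_tsum_of_nonneg (fun i => Real.rpow_nonneg (hf i) w) hfw]
    exact tsum_congr fun i => ENNReal.ofReal_rpow_of_nonneg (hf i) hw
  have pointwise : ∀ i, ENNReal.ofReal (b i) ≤
      ∑' k, ENNReal.ofReal (ψ (i - k)) * ENNReal.ofReal (a k) := by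
    intro i
    calc ENNReal.ofReal (b i) ≤ ENNReal.ofReal (∑' k, ψ (i - k) * a k) :=
          ENNReal.ofReal_le_ofReal (hb i)
      _ ≤ ∑' k, ENNReal.ofReal (ψ (i - k) * a k) :=
          ENNReal.ofReal_tsum_le_tsum_ofReal fun k => mul_nonneg (hψ₀ _) (ha₀ k)
      _ = _ := tsum_congr fun k => ENNReal.ofReal_mul (hψ₀ _)
  have hP₀ : 0 ≤ ∑' i, ψ i ^ u := tsum_nonneg fun i => Real.rpow_nonneg (hψ₀ i) u
  have hQ₀ : 0 ≤ ∑' i, a i ^ v := tsum_nonneg fun i => Real.rpow_nonneg (ha₀ i) v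
  refine summable_and_tsum_le_of_tsum_ofReal_le (fun i => sq_nonneg (b i)) (by positivity) ?_
  calc ∑' i, ENNReal.ofReal (b i ^ 2) = ∑' i, ENNReal.ofReal (b i) ^ 2 := by
        simp only [ENNReal.ofReal_pow (hb₀ _)]
    _ ≤ ∑' i, (∑' k, ENNReal.ofReal (ψ (i - k)) * ENNReal.ofReal (a k)) ^ 2 := by
        gcongr with i
        exact pointwise i
    _ ≤ (∑' i, ENNReal.ofReal (ψ i) ^ u) ^ (2 / u) * (∑' i, ENNReal.ofReal (a i) ^ v) ^ (2 / v) :=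
        ENNReal.tsum_sq_conv_le _ _ hu hv huv
    _ = _ := by
        rw [ofReal_tsum_rpow ψ (by linarith) hψ₀ hψ, ofReal_tsum_rpow a (by linarith) ha₀ ha,
          ENNReal.ofReal_rpow_of_nonneg hP₀ (by positivity),
          ENNReal.ofReal_rpow_of_nonneg hQ₀ (by positivity), ENNReal.ofReal_mul (by positivity)]

theorem GEMB.hasSubgaussianMGF {d : ℕ} {μ : Measure (Config d)} [IsProbabilityMeasure μ]
    {c : ℝ} (hμ : GEMB μ c) (hc : 0 ≤ c) {g : Config d → ℝ} (hg : Measurable g)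
    (hgb : ∃ M, ∀ σ, |g σ| ≤ M) (hsum : Summable fun i => varAt i g ^ 2) {D : ℝ}
    (hD : ∑' i, varAt i g ^ 2 ≤ D) :
    HasSubgaussianMGF (fun σ => g σ - ∫ τ, g τ ∂μ) (2 * c * D).toNNReal μ := by
  obtain ⟨M, hM⟩ := hgb
  set m := ∫ τ, g τ ∂μ
  have hD₀ : 0 ≤ D := (tsum_nonneg fun i => sq_nonneg _).trans hD
  refine ⟨fun t => ?_, fun t => ?_⟩
  · refine Integrable.of_bound (by fun_prop) (exp (|t| * (M + |m|))) (ae_of_all _ fun σ => ?_)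
    rw [Real.norm_eq_abs, abs_of_pos (exp_pos _), exp_le_exp]
    calc t * (g σ - m) ≤ |t| * |g σ - m| := (le_abs_self _).trans (abs_mul _ _).le
      _ ≤ |t| * (M + |m|) := by
          gcongr
          exact (abs_sub _ _).trans (add_le_add_left (hM σ) _)
  · have hvar : ∀ i, varAt i (fun σ => t * g σ) ^ 2 = t ^ 2 * varAt i g ^ 2 := fun i => by
      rw [varAt_const_mul, mul_pow, sq_abs]
    have hgemb := hμ (fun σ => t * g σ) (hg.const_mul t)
      ⟨|t| * M, fun σ => by rw [abs_mul]; gcongr; exact hM σ⟩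
      (by simp_rw [hvar]; exact hsum.mul_left _)
    rw [integral_const_mul] at hgemb
    calc mgf (fun σ => g σ - m) μ t = ∫ σ, exp (t * g σ - t * m) ∂μ := by simp [mgf, mul_sub]
      _ ≤ exp (c * ∑' i, varAt i (fun σ => t * g σ) ^ 2) := hgemb
      _ ≤ exp ((2 * c * D).toNNReal * t ^ 2 / 2) := by
          rw [Real.coe_toNNReal _ (by positivity), exp_le_exp]
          simp_rw [hvar]
          rw [tsum_mul_left]
          nlinarith [mul_le_mul_of_nonneg_left hD (mul_nonneg hc (sq_nonneg t))]

section Moments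

variable {Ω : Type*} [MeasurableSpace Ω] {μ : Measure Ω} {X : Ω → ℝ}

lemma ProbabilityTheory.HasSubgaussianMGF.measure_lt_abs_le [IsFiniteMeasure μ] {K : ℝ≥0}
    (h : HasSubgaussianMGF X K μ) {t : ℝ} (ht : 0 ≤ t) :
    μ {ω | t < |X ω|} ≤ ENNReal.ofReal (2 * exp (-t ^ 2 / (2 * K))) := by
  have upper := h.measure_ge_le ht
  have lower := h.neg.measure_ge_le ht
  calc μ {ω | t < |X ω|} ≤ μ ({ω | t ≤ X ω} ∪ {ω | t ≤ (-X) ω}) :=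
        measure_mono fun ω (hω : t < |X ω|) => (lt_abs.mp hω).imp (fun h => h.le) fun h => h.le
    _ ≤ μ {ω | t ≤ X ω} + μ {ω | t ≤ (-X) ω} := measure_union_le _ _
    _ ≤ ENNReal.ofReal (exp (-t ^ 2 / (2 * K))) + ENNReal.ofReal (exp (-t ^ 2 / (2 * K))) := by
        rw [← ofReal_measureReal, ← ofReal_measureReal]
        gcongr
    _ = ENNReal.ofReal (2 * exp (-t ^ 2 / (2 * K))) := by
        rw [← ENNReal.ofReal_add (by positivity) (by positivity), ← two_mul]

lemma integral_Ioi_rpow_sub_one_mul_exp_neg_mul_sq {a p : ℝ} (ha : 0 < a) (hp : 0 < p) :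
    ∫ t in Set.Ioi (0 : ℝ), t ^ (p - 1) * exp (-(1 / a) * t ^ 2) =
      a ^ (p / 2) * Gamma (p / 2) / 2 := by
  simp_rw [← rpow_two]
  rw [integral_rpow_mul_exp_neg_mul_rpow two_pos (by linarith) (by positivity),
    sub_add_cancel, one_div, inv_rpow ha.le, ← rpow_neg ha.le, neg_div, neg_neg]
  ring

lemma lintegral_abs_rpow_le_of_measure_lt_abs_le (hX : AEMeasurable X μ) {a : ℝ} (ha : 0 < a)
    (htail : ∀ t, 0 < t → μ {ω | t < |X ω|} ≤ ENNReal.ofReal (2 * exp (-t ^ 2 / a)))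
    {p : ℝ} (hp : 0 < p) :
    ∫⁻ ω, ENNReal.ofReal (|X ω| ^ p) ∂μ ≤ ENNReal.ofReal (p * Gamma (p / 2) * a ^ (p / 2)) := by
  have hint : IntegrableOn (fun t => 2 * (t ^ (p - 1) * exp (-(1 / a) * t ^ 2))) (Set.Ioi 0) :=
    (integrableOn_rpow_mul_exp_neg_mul_sq (by positivity) (by linarith)).const_mul 2
  rw [lintegral_rpow_eq_lintegral_meas_lt_mul μ (ae_of_all _ fun _ => abs_nonneg _) hX.abs hp]
  calc ENNReal.ofReal p * ∫⁻ t in Set.Ioi 0, μ {ω | t < |X ω|} * ENNReal.ofReal (t ^ (p - 1))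
      ≤ ENNReal.ofReal p *
          ∫⁻ t in Set.Ioi 0, ENNReal.ofReal (2 * (t ^ (p - 1) * exp (-(1 / a) * t ^ 2))) := by
        gcongr ENNReal.ofReal p * ?_
        refine setLIntegral_mono' measurableSet_Ioi fun t (ht : 0 < t) => ?_
        grw [htail t ht, ← ENNReal.ofReal_mul (by positivity)]
        exact le_of_eq (congrArg ENNReal.ofReal (by ring_nf))
    _ = ENNReal.ofReal (p * Gamma (p / 2) * a ^ (p / 2)) := by
        rw [← ofReal_integral_eq_lintegral_ofReal hint
          (ae_restrict_of_forall_mem measurableSet_Ioi fun t (ht : 0 < t) => by positivity),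
          integral_const_mul, integral_Ioi_rpow_sub_one_mul_exp_neg_mul_sq ha hp,
          ← ENNReal.ofReal_mul hp.le]
        ring_nf

lemma ProbabilityTheory.HasSubgaussianMGF.integral_abs_rpow_le [IsFiniteMeasure μ] {K : ℝ≥0}
    (h : HasSubgaussianMGF X K μ) {p : ℝ} (hp : 0 < p) :
    ∫ ω, |X ω| ^ p ∂μ ≤ p * Gamma (p / 2) * (2 * K) ^ (p / 2) := by
  rcases eq_or_ne K 0 with rfl | hK
  · have hX₀ : X =ᵐ[μ] 0 := h.ae_eq_zero_of_hasSubgaussianMGF_zero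
    rw [integral_eq_zero_of_ae (hX₀.mono fun ω hω => by simp [hω, zero_rpow hp.ne'])]
    simp [zero_rpow (by positivity : p / 2 ≠ 0)]
  rw [integral_eq_lintegral_of_nonneg_ae (ae_of_all _ fun ω => by positivity)
    (h.aemeasurable.abs.pow_const p).aestronglyMeasurable]
  refine ENNReal.toReal_le_of_le_ofReal (by positivity)
    (lintegral_abs_rpow_le_of_measure_lt_abs_le h.aemeasurable (by positivity)
      (fun t ht => h.measure_lt_abs_le ht.le) hp)

lemma ProbabilityTheory.HasSubgaussianMGF.integral_abs_rpow_rpow_one_div_le [IsFiniteMeasure μ]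
    {K : ℝ≥0} (h : HasSubgaussianMGF X K μ) {p : ℝ} (hp : 0 < p) :
    (∫ ω, |X ω| ^ p ∂μ) ^ (1 / p) ≤ (p * Gamma (p / 2)) ^ (1 / p) * √(2 * K) := by
  calc (∫ ω, |X ω| ^ p ∂μ) ^ (1 / p) ≤ (p * Gamma (p / 2) * (2 * K) ^ (p / 2)) ^ (1 / p) := by
        gcongr
        exact h.integral_abs_rpow_le hp
    _ = (p * Gamma (p / 2)) ^ (1 / p) * √(2 * K) := by
        rw [mul_rpow (by positivity) (by positivity), ← rpow_mul (by positivity), sqrt_eq_rpow,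
          show p / 2 * (1 / p) = 1 / 2 by field_simp]

end Moments

theorem gemb_Lp_bound_general {d : ℕ}
    (μ : Measure (Config d)) [IsProbabilityMeasure μ]
    (c : ℝ) (hc : 0 < c) (hGEMB : GEMB μ c)
    (f g : Config d → ℝ)
    (hg : Measurable g) (hgb : ∃ M, ∀ σ, |g σ| ≤ M)
    (ψ : (Fin d → ℤ) → ℝ) (hψ0 : ∀ i, 0 ≤ ψ i)
    (hdom : ∀ i : Fin d → ℤ, varAt i g ≤ ∑' k : Fin d → ℤ, ψ (i - k) * varAt k f)
    (u v : ℝ) (hu : 1 ≤ u) (hv : 1 ≤ v) (huv : 1 / u + 1 / v = 3 / 2)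
    (hψ : Summable (fun i : Fin d → ℤ => ψ i ^ u))
    (hfv : Summable (fun i : Fin d → ℤ => varAt i f ^ v))
    (p : ℝ) (hp : 1 ≤ p) :
    (∫ σ, |g σ - ∫ τ, g τ ∂μ| ^ p ∂μ) ^ (1 / p) ≤
      2 * Real.sqrt c * (p * Real.Gamma (p / 2)) ^ (1 / p) *
        (∑' i : Fin d → ℤ, ψ i ^ u) ^ (1 / u) *
        (∑' i : Fin d → ℤ, varAt i f ^ v) ^ (1 / v) := by
  set P := ∑' i : Fin d → ℤ, ψ i ^ u
  set Q := ∑' i : Fin d → ℤ, varAt i f ^ v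
  have hP : 0 ≤ P := tsum_nonneg fun i => rpow_nonneg (hψ0 i) u
  have hQ : 0 ≤ Q := tsum_nonneg fun i => rpow_nonneg (varAt_nonneg i f) v
  obtain ⟨hsum, hD⟩ := summable_sq_and_tsum_sq_le_of_le_conv hψ0 (varAt_nonneg · f)
    (varAt_nonneg · g) hdom hu hv huv hψ hfv
  have hLp := (hGEMB.hasSubgaussianMGF hc.le hg hgb hsum hD).integral_abs_rpow_rpow_one_div_le
    (by linarith : 0 < p)
  have hscale : √(2 * ((2 * c * (P ^ (2 / u) * Q ^ (2 / v))).toNNReal : ℝ)) =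
      2 * √c * P ^ (1 / u) * Q ^ (1 / v) := by
    have sq_rpow : ∀ x : ℝ, 0 ≤ x → ∀ w : ℝ, (x ^ (1 / w)) ^ 2 = x ^ (2 / w) := fun x hx w => by
      rw [← rpow_natCast, ← rpow_mul hx]
      ring_nf
    rw [← sqrt_sq (by positivity : 0 ≤ 2 * √c * P ^ (1 / u) * Q ^ (1 / v)),
      Real.coe_toNNReal _ (by positivity), mul_pow, mul_pow, mul_pow, sq_sqrt hc.le,
      sq_rpow P hP, sq_rpow Q hQ]
    ring_nf
  exact hLp.trans_eq (by rw [hscale]; ring)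

/-- the `L^p` estimate of Corollary 3.2 of the paper:
if `μ` satisfies GEMB(c), `δg ≤ ψ * δf` pointwise, `1/u + 1/v = 3/2`, and
`0 < ‖ψ‖_u < ∞`, `0 < ‖δf‖_v < ∞`, then for every real `p ≥ 1`,
`‖g - ∫ g dμ‖_{L^p(μ)} ≤ 2√c (p Γ(p/2))^{1/p} ‖ψ‖_u ‖δf‖_v`. -/
theorem gemb_Lp_bound {d : ℕ} (hd : 1 ≤ d)
    (μ : Measure (Config d)) [IsProbabilityMeasure μ]
    (c : ℝ) (hc : 0 < c) (hGEMB : GEMB μ c)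
    (f g : Config d → ℝ) (hf : Measurable f) (hfb : ∃ M, ∀ σ, |f σ| ≤ M)
    (hg : Measurable g) (hgb : ∃ M, ∀ σ, |g σ| ≤ M)
    (ψ : (Fin d → ℤ) → ℝ) (hψ0 : ∀ i, 0 ≤ ψ i)
    (hdom : ∀ i : Fin d → ℤ, varAt i g ≤ ∑' k : Fin d → ℤ, ψ (i - k) * varAt k f)
    (u v : ℝ) (hu : 1 ≤ u) (hv : 1 ≤ v) (huv : 1 / u + 1 / v = 3 / 2)
    (hψ : Summable (fun i : Fin d → ℤ => ψ i ^ u))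
    (hψpos : 0 < ∑' i : Fin d → ℤ, ψ i ^ u)
    (hfv : Summable (fun i : Fin d → ℤ => varAt i f ^ v))
    (hfvpos : 0 < ∑' i : Fin d → ℤ, varAt i f ^ v)
    (p : ℝ) (hp : 1 ≤ p) :
    (∫ σ, |g σ - ∫ τ, g τ ∂μ| ^ p ∂μ) ^ (1 / p) ≤
      2 * Real.sqrt c * (p * Real.Gamma (p / 2)) ^ (1 / p) *
        (∑' i : Fin d → ℤ, ψ i ^ u) ^ (1 / u) *
        (∑' i : Fin d → ℤ, varAt i f ^ v) ^ (1 / v) :=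
  gemb_Lp_bound_general μ c hc hGEMB f g hg hgb ψ hψ0 hdom u v hu hv huv hψ hfv p hp
end
end

section
/- Let γ : ℕ → [0,1) and α > 0 real with γ_m ≤ e^{−α m} for all m ∈ ℕ. Let (q_m) be the return probabilities to 0 of the house-of-cards chain with parameters γ started at 0, i.e., q_0 = 1 and q_m = Σ_{j=0}^{m−1} q_{m−1−j} π_j γ_j for m ≥ 1, where π_0 = 1 and π_{j+1} = π_j (1 − γ_j). Then there exist constants C > 0 and α' with 0 < α' ≤ α such that q_m ≤ C e^{−α' m} for all m ∈ ℕ. -/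
/-!
The first return time to `0` is `j + 1` with probability `f j = π_j γ_j`, and `q` is the renewal
sequence of this law. Since `∑ γ_j < ∞` and `γ_j < 1`, the survival probabilities
`π_m = ∏_{l<m} (1 - γ_l)` stay above some `δ > 0`, so the return law has total mass
`1 - π_∞ ≤ 1 - δ`; it also has an exponential moment of order `α / 2`. By convexity of
`a ↦ e^{a x}`, a small enough exponential moment of order `a > 0` is still at most `1`, and then
`q_m ≤ e^{-a m}` follows from the renewal equation by strong induction.
-/

open Finset Real

lemma one_sub_sum_le_prod_one_sub {ι : Type*} (s : Finset ι) {f : ι → ℝ}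
    (h0 : ∀ i ∈ s, 0 ≤ f i) (h1 : ∀ i ∈ s, f i ≤ 1) :
    1 - ∑ i ∈ s, f i ≤ ∏ i ∈ s, (1 - f i) := by
  classical
  induction s using Finset.induction_on with
  | empty => simp
  | @insert a s ha ih =>
    rw [sum_insert ha, prod_insert ha]
    have hfa0 := h0 a (mem_insert_self a s)
    have hfa1 := h1 a (mem_insert_self a s)
    have ih := ih (fun i hi => h0 i (mem_insert_of_mem hi))
      (fun i hi => h1 i (mem_insert_of_mem hi))
    have hsum : 0 ≤ ∑ i ∈ s, f i := sum_nonneg fun i hi => h0 i (mem_insert_of_mem hi)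
    nlinarith [mul_le_mul_of_nonneg_left ih (sub_nonneg.2 hfa1)]

lemma exists_pos_le_prod_range_one_sub {γ : ℕ → ℝ} (h0 : ∀ l, 0 ≤ γ l) (h1 : ∀ l, γ l < 1)
    (hγ : Summable γ) : ∃ δ > 0, ∀ m, δ ≤ ∏ l ∈ range m, (1 - γ l) := by
  obtain ⟨N, hN⟩ := (hγ.hasSum.tendsto_sum_nat.eventually_const_lt
    (sub_lt_self (∑' l, γ l) one_half_pos)).exists
  have hfactor0 : ∀ l, 0 ≤ 1 - γ l := fun l => sub_nonneg.2 (h1 l).le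
  have hPN : 0 < ∏ l ∈ range N, (1 - γ l) := prod_pos fun l _ => sub_pos.2 (h1 l)
  refine ⟨(∏ l ∈ range N, (1 - γ l)) / 2, half_pos hPN, fun m => ?_⟩
  rcases le_total m N with hmN | hNm
  · have hIco : ∏ l ∈ Ico m N, (1 - γ l) ≤ 1 :=
      prod_le_one (fun l _ => hfactor0 l) fun l _ => sub_le_self 1 (h0 l)
    have hPm : 0 ≤ ∏ l ∈ range m, (1 - γ l) := prod_nonneg fun l _ => hfactor0 l
    rw [← prod_range_mul_prod_Ico _ hmN] at hPN ⊢
    nlinarith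
  · have htail : ∑ l ∈ Ico N m, γ l ≤ 1 / 2 := by
      rw [sum_Ico_eq_sub _ hNm]
      linarith [hγ.sum_le_tsum (range m) fun l _ => h0 l]
    have hIco : 1 / 2 ≤ ∏ l ∈ Ico N m, (1 - γ l) :=
      le_trans (by linarith) (one_sub_sum_le_prod_one_sub _ (fun l _ => h0 l) fun l _ => (h1 l).le)
    rw [← prod_range_mul_prod_Ico _ hNm]
    nlinarith

lemma sum_range_prod_one_sub_mul (γ : ℕ → ℝ) (m : ℕ) :
    ∑ j ∈ range m, (∏ l ∈ range j, (1 - γ l)) * γ j = 1 - ∏ l ∈ range m, (1 - γ l) := by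
  have hstep : ∀ j, (∏ l ∈ range j, (1 - γ l)) * γ j =
      ∏ l ∈ range j, (1 - γ l) - ∏ l ∈ range (j + 1), (1 - γ l) := fun j => by
    rw [prod_range_succ]; ring
  simp_rw [hstep]
  rw [sum_range_sub', prod_range_zero]

lemma sum_exp_mul_le_of_le_exp_neg_mul {f : ℕ → ℝ} {s α : ℝ} (hf : ∀ j : ℕ, f j ≤ exp (-α * j))
    (hs : s < α) (m : ℕ) :
    ∑ j ∈ range m, exp (s * (j + 1)) * f j ≤ exp s / (1 - exp (s - α)) := by
  have hr : exp (s - α) < 1 := exp_lt_one_iff.2 (by linarith)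
  calc ∑ j ∈ range m, exp (s * (j + 1)) * f j
      ≤ ∑ j ∈ range m, exp s * exp (s - α) ^ j := by
        refine sum_le_sum fun j _ => ?_
        calc exp (s * (j + 1)) * f j ≤ exp (s * (j + 1)) * exp (-α * j) :=
              mul_le_mul_of_nonneg_left (hf j) (exp_pos _).le
          _ = exp s * exp (s - α) ^ j := by
              rw [← exp_nat_mul, ← exp_add, ← exp_add]; ring_nf
    _ = exp s * ∑ j ∈ Ico 0 m, exp (s - α) ^ j := by rw [mul_sum, range_eq_Ico]
    _ ≤ exp s * (exp (s - α) ^ 0 / (1 - exp (s - α))) :=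
        mul_le_mul_of_nonneg_left (geom_sum_Ico_le_of_lt_one (exp_pos _).le hr) (exp_pos _).le
    _ = exp s / (1 - exp (s - α)) := by rw [pow_zero, mul_one_div]

lemma exp_mul_le_one_sub_add_mul_exp {θ : ℝ} (h0 : 0 ≤ θ) (h1 : θ ≤ 1) (x : ℝ) :
    exp (θ * x) ≤ 1 - θ + θ * exp x := by
  have := convexOn_exp.2 (Set.mem_univ 0) (Set.mem_univ x) (sub_nonneg.2 h1) h0 (by ring)
  simpa [add_comm] using this

lemma exists_pos_sum_exp_mul_le_one {f : ℕ → ℝ} {s δ K : ℝ} (hf0 : ∀ j, 0 ≤ f j) (hs : 0 < s)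
    (hδ : 0 < δ) (hf : ∀ m, ∑ j ∈ range m, f j ≤ 1 - δ)
    (hK : ∀ m, ∑ j ∈ range m, exp (s * (j + 1)) * f j ≤ K) :
    ∃ a, 0 < a ∧ a ≤ s ∧ ∀ m, ∑ j ∈ range m, exp (a * (j + 1)) * f j ≤ 1 := by
  have hK0 : 0 ≤ K := by simpa using hK 0
  set θ := δ / (K + δ) with hθ
  have hθ0 : 0 < θ := by positivity
  have hθ1 : θ ≤ 1 := (div_le_one (by positivity)).2 (by linarith)
  have hθK : θ * K ≤ δ := by
    rw [hθ, div_mul_eq_mul_div, div_le_iff₀ (by positivity)]; nlinarith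
  refine ⟨θ * s, mul_pos hθ0 hs, mul_le_of_le_one_left hs.le hθ1, fun m => ?_⟩
  have hsum0 : 0 ≤ ∑ j ∈ range m, f j := sum_nonneg fun j _ => hf0 j
  calc ∑ j ∈ range m, exp (θ * s * (j + 1)) * f j
      ≤ ∑ j ∈ range m, ((1 - θ) * f j + θ * (exp (s * (j + 1)) * f j)) := by
        refine sum_le_sum fun j _ => ?_
        rw [mul_assoc]
        nlinarith [exp_mul_le_one_sub_add_mul_exp hθ0.le hθ1 (s * (j + 1)), hf0 j]
    _ = (1 - θ) * ∑ j ∈ range m, f j + θ * ∑ j ∈ range m, exp (s * (j + 1)) * f j := by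
        rw [sum_add_distrib, mul_sum, mul_sum]
    _ ≤ (1 - δ) + θ * K := by
        gcongr
        · nlinarith [hf m]
        · exact hK m
    _ ≤ 1 := by linarith

lemma le_exp_neg_mul_of_renewal {q f : ℕ → ℝ} {a : ℝ} (hf0 : ∀ j, 0 ≤ f j) (hq0 : q 0 ≤ 1)
    (hq : ∀ m, 1 ≤ m → q m = ∑ j ∈ range m, q (m - 1 - j) * f j)
    (hf : ∀ m, ∑ j ∈ range m, exp (a * (j + 1)) * f j ≤ 1) (m : ℕ) :
    q m ≤ exp (-a * m) := by
  induction m using Nat.strong_induction_on with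
  | _ m ih =>
    rcases Nat.eq_zero_or_pos m with rfl | hm
    · simpa using hq0
    have hterm : ∀ j ∈ range m,
        q (m - 1 - j) * f j ≤ exp (-a * m) * (exp (a * (j + 1)) * f j) := fun j hj => by
      have hjm := mem_range.1 hj
      have hexp : exp (-a * ↑(m - 1 - j)) = exp (-a * m) * exp (a * (j + 1)) := by
        rw [← exp_add, Nat.cast_sub (by omega), Nat.cast_sub (by omega)]; push_cast; ring_nf
      rw [← mul_assoc, ← hexp]
      exact mul_le_mul_of_nonneg_right (ih _ (by omega)) (hf0 j)
    calc q m ≤ ∑ j ∈ range m, exp (-a * m) * (exp (a * (j + 1)) * f j) :=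
          hq m hm ▸ sum_le_sum hterm
      _ ≤ exp (-a * m) := by
          rw [← mul_sum]; exact mul_le_of_le_one_right (exp_pos _).le (hf m)

/-- exponential decay of the return probabilities of the
house-of-cards chain. If the reset probabilities satisfy `γ_m ≤ e^{-α m}` with `α > 0`,
then the return probabilities `q_m` (defined by the renewal recursion
`q_0 = 1`, `q_m = ∑_{j=0}^{m-1} q_{m-1-j} π_j γ_j`, where `π_0 = 1` and
`π_{j+1} = π_j (1 - γ_j)`) satisfy `q_m ≤ C e^{-α' m}` for some constant `C > 0` and
some rate `α'` with `0 < α' ≤ α`. -/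
theorem houseOfCards_exponential_decay (α : ℝ) (hα : 0 < α)
    (γ : ℕ → ℝ) (hγ : ∀ m, 0 ≤ γ m ∧ γ m < 1)
    (hdecay : ∀ m : ℕ, γ m ≤ Real.exp (-α * m))
    (pi q : ℕ → ℝ)
    (hpi0 : pi 0 = 1) (hpi : ∀ j, pi (j + 1) = pi j * (1 - γ j))
    (hq0 : q 0 = 1)
    (hq : ∀ m : ℕ, 1 ≤ m → q m = ∑ j ∈ Finset.range m, q (m - 1 - j) * pi j * γ j) :
    ∃ C : ℝ, 0 < C ∧ ∃ α' : ℝ, 0 < α' ∧ α' ≤ α ∧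
      ∀ m : ℕ, q m ≤ C * Real.exp (-α' * m) := by
  have hγ0 : ∀ m, 0 ≤ γ m := fun m => (hγ m).1
  have hpi_eq : ∀ n, pi n = ∏ l ∈ range n, (1 - γ l) := fun n =>
    (prod_range_induction _ pi hpi0 n fun k _ => hpi k).symm
  have hpi_mem : ∀ n, 0 ≤ pi n ∧ pi n ≤ 1 := fun n => by
    rw [hpi_eq]
    exact ⟨prod_nonneg fun l _ => sub_nonneg.2 (hγ l).2.le,
      prod_le_one (fun l _ => sub_nonneg.2 (hγ l).2.le) fun l _ => sub_le_self 1 (hγ0 l)⟩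
  have hf0 : ∀ j, 0 ≤ pi j * γ j := fun j => mul_nonneg (hpi_mem j).1 (hγ0 j)
  have hf_le : ∀ j : ℕ, pi j * γ j ≤ exp (-α * j) := fun j =>
    (mul_le_of_le_one_left (hγ0 j) (hpi_mem j).2).trans (hdecay j)
  have hγ_summable : Summable γ := by
    refine .of_nonneg_of_le hγ0 (fun m => (hdecay m).trans_eq ?_)
      (summable_geometric_of_lt_one (exp_pos (-α)).le (exp_lt_one_iff.2 (neg_neg_of_pos hα)))
    rw [mul_comm, exp_nat_mul]
  obtain ⟨δ, hδ, hδ_le⟩ := exists_pos_le_prod_range_one_sub hγ0 (fun m => (hγ m).2) hγ_summable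
  have hmass : ∀ m, ∑ j ∈ range m, pi j * γ j ≤ 1 - δ := fun m => by
    simp_rw [hpi_eq]
    linarith [sum_range_prod_one_sub_mul γ m, hδ_le m]
  obtain ⟨a, ha, ha_le, hmoment⟩ := exists_pos_sum_exp_mul_le_one hf0 (half_pos hα) hδ hmass
    (sum_exp_mul_le_of_le_exp_neg_mul hf_le (half_lt_self hα))
  refine ⟨1, one_pos, a, ha, ha_le.trans (half_le_self hα.le), fun m => ?_⟩
  rw [one_mul]
  refine le_exp_neg_mul_of_renewal hf0 hq0.le (fun m hm => ?_) hmoment m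
  simp_rw [← mul_assoc]
  exact hq m hm
end
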